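/- Let f, g, m : I → R be differentiable functions with f and g nowhere zero, and let γ(t) = (f + m·g, g − m·f, f − m·g, g + m·f). If γ is a null curve in E⁴₂, i.e., ⟨γ',γ'⟩ = 0 pointwise (where ⟨x,y⟩ = x1y1 + x2y2 − x3y3 − x4y4 and note ⟨γ,γ⟩ = 0 automatically), then (fg' − f'g)(1 + m²)(f² + g²)·m' = 0 pointwise; in particular, if fg' − f'g is nowhere zero, then m' ≡ 0, i.e., m is constant. -/

import Mathlib

/-!
Differentiating, `γ₁' = f' + X`, `γ₃' = f' - X`, `γ₂' = g' - Y`, `γ₄' = g' + Y` with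
`X = (m g)'` and `Y = (m f)'`, so `⟨γ', γ'⟩ = 4 (f' X - g' Y)`, and the terms `m f' g'` cancel:
`f' X - g' Y = -(f g' - f' g) m'`. Hence a null tangent forces `(f g' - f' g) m' = 0`.
-/

section

variable {u v m : ℝ → ℝ} {t : ℝ}

theorem deriv_fun_add_mul (hu : DifferentiableAt ℝ u t) (hm : DifferentiableAt ℝ m t)
    (hv : DifferentiableAt ℝ v t) :
    deriv (fun s => u s + m s * v s) t = deriv u t + (deriv m t * v t + m t * deriv v t) := by
  rw [deriv_fun_add (g := fun s => m s * v s) hu (hm.mul hv), deriv_fun_mul hm hv]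

theorem deriv_fun_sub_mul (hu : DifferentiableAt ℝ u t) (hm : DifferentiableAt ℝ m t)
    (hv : DifferentiableAt ℝ v t) :
    deriv (fun s => u s - m s * v s) t = deriv u t - (deriv m t * v t + m t * deriv v t) := by
  rw [deriv_fun_sub (g := fun s => m s * v s) hu (hm.mul hv), deriv_fun_mul hm hv]

end

theorem wronskian_mul_deriv_eq_zero_of_null {f g m : ℝ → ℝ} {t : ℝ}
    (hf : DifferentiableAt ℝ f t) (hg : DifferentiableAt ℝ g t) (hm : DifferentiableAt ℝ m t)
    (hnull : deriv (fun s => f s + m s * g s) t ^ 2 + deriv (fun s => g s - m s * f s) t ^ 2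
        - deriv (fun s => f s - m s * g s) t ^ 2 - deriv (fun s => g s + m s * f s) t ^ 2 = 0) :
    (f t * deriv g t - deriv f t * g t) * deriv m t = 0 := by
  rw [deriv_fun_add_mul hf hm hg, deriv_fun_sub_mul hg hm hf, deriv_fun_sub_mul hf hm hg,
    deriv_fun_add_mul hg hm hf] at hnull
  linear_combination -hnull / 4

theorem null_curve_m_constant_general (f g m : ℝ → ℝ)
    (hf : Differentiable ℝ f) (hg : Differentiable ℝ g) (hm : Differentiable ℝ m)
    (γ1 γ2 γ3 γ4 : ℝ → ℝ)
    (hγ1 : γ1 = fun t => f t + m t * g t) (hγ2 : γ2 = fun t => g t - m t * f t)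
    (hγ3 : γ3 = fun t => f t - m t * g t) (hγ4 : γ4 = fun t => g t + m t * f t)
    (hnulltan : ∀ t, deriv γ1 t ^ 2 + deriv γ2 t ^ 2
        - deriv γ3 t ^ 2 - deriv γ4 t ^ 2 = 0) :
    (∀ t, (f t * deriv g t - deriv f t * g t) * (1 + m t ^ 2)
        * (f t ^ 2 + g t ^ 2) * deriv m t = 0) ∧
    ((∀ t, f t * deriv g t - deriv f t * g t ≠ 0) → ∀ t, deriv m t = 0) := by
  subst hγ1 hγ2 hγ3 hγ4
  have hWm (t : ℝ) : (f t * deriv g t - deriv f t * g t) * deriv m t = 0 :=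
    wronskian_mul_deriv_eq_zero_of_null (hf t) (hg t) (hm t) (hnulltan t)
  refine ⟨fun t => ?_, fun hW t => (mul_eq_zero.mp (hWm t)).resolve_left (hW t)⟩
  linear_combination ((1 + m t ^ 2) * (f t ^ 2 + g t ^ 2)) * hWm t

theorem null_curve_m_constant (f g m : ℝ → ℝ)
    (hf : Differentiable ℝ f) (hg : Differentiable ℝ g) (hm : Differentiable ℝ m)
    (hf0 : ∀ t, f t ≠ 0) (hg0 : ∀ t, g t ≠ 0)
    (γ1 γ2 γ3 γ4 : ℝ → ℝ)
    (hγ1 : γ1 = fun t => f t + m t * g t) (hγ2 : γ2 = fun t => g t - m t * f t)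
    (hγ3 : γ3 = fun t => f t - m t * g t) (hγ4 : γ4 = fun t => g t + m t * f t)
    (hnulltan : ∀ t, deriv γ1 t ^ 2 + deriv γ2 t ^ 2
        - deriv γ3 t ^ 2 - deriv γ4 t ^ 2 = 0) :
    (∀ t, (f t * deriv g t - deriv f t * g t) * (1 + m t ^ 2)
        * (f t ^ 2 + g t ^ 2) * deriv m t = 0) ∧
    ((∀ t, f t * deriv g t - deriv f t * g t ≠ 0) → ∀ t, deriv m t = 0) :=
  null_curve_m_constant_general f g m hf hg hm γ1 γ2 γ3 γ4 hγ1 hγ2 hγ3 hγ4 hnulltan
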